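/- The function z ↦ z² ψ'(z) is subadditive on (0, ∞): for all x, y > 0, (x+y)² ψ'(x+y) ≤ x² ψ'(x) + y² ψ'(y). -/

import Mathlib

/-!
On `(0, ∞)` the trigamma function is the Hurwitz sum `ζ(2, x) = ∑ₙ (x + n)⁻²`, obtained by
differentiating Euler's limit formula for `log Γ` twice. The derivative of `x ζ(2, x)` is
`ζ(2, x) - 2x ζ(3, x)`, and telescoping bounds give `ζ(2, x) ≤ 2 / (2x - 1) ≤ 2x ζ(3, x)` for
`x ≥ 1`, while for `x < 1` the term `n = 0` dominates. Hence `φ(z) = z ψ'(z)` is nonincreasing, and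
`(x + y)² ψ'(x + y) = x φ(x + y) + y φ(x + y) ≤ x φ(x) + y φ(y)`.
-/

open Real

/-- The trigamma function: second derivative of `log ∘ Γ`. -/
noncomputable def trigamma (z : ℝ) : ℝ :=
  iteratedDeriv 2 (fun x => Real.log (Real.Gamma x)) z

open Filter Topology Set

/-- The Hurwitz zeta function `ζ(k, x)` for `x > 0`. -/
noncomputable def hurwitzSum (k : ℕ) (x : ℝ) : ℝ := ∑' n : ℕ, ((x + n) ^ k)⁻¹

lemma summable_inv_add_pow (x : ℝ) {k : ℕ} (hk : 1 < k) :
    Summable fun n : ℕ => ((x + n) ^ k)⁻¹ := by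
  refine .of_norm (((summable_one_div_nat_add_rpow x k).2 (mod_cast hk)).congr fun n => ?_)
  rw [norm_inv, norm_pow, Real.norm_eq_abs, add_comm, rpow_natCast, one_div]

lemma hurwitzSum_eq_inv_pow_add {k : ℕ} (hk : 1 < k) (x : ℝ) :
    hurwitzSum k x = (x ^ k)⁻¹ + hurwitzSum k (x + 1) := by
  rw [hurwitzSum, (summable_inv_add_pow x hk).tsum_eq_zero_add, hurwitzSum]
  simp only [Nat.cast_zero, add_zero, Nat.cast_succ, add_assoc, add_comm (1 : ℝ)]

lemma inv_pow_le_hurwitzSum {k : ℕ} (hk : 1 < k) {x : ℝ} (hx : 0 ≤ x) :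
    (x ^ k)⁻¹ ≤ hurwitzSum k x := by
  simpa [hurwitzSum] using (summable_inv_add_pow x hk).le_tsum 0 fun n _ => by positivity

lemma tsum_le_of_le_sub_succ {f g : ℕ → ℝ} (hf : Summable f) (hg : Tendsto g atTop (𝓝 0))
    (h : ∀ n, f n ≤ g n - g (n + 1)) : ∑' n, f n ≤ g 0 := by
  refine le_of_tendsto_of_tendsto' hf.hasSum.tendsto_sum_nat (by simpa using hg.const_sub (g 0))
    fun n => ?_
  rw [← Finset.sum_range_sub']
  exact Finset.sum_le_sum fun i _ => h i

lemma le_tsum_of_sub_succ_le {f g : ℕ → ℝ} (hf : Summable f) (hg : Tendsto g atTop (𝓝 0))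
    (h : ∀ n, g n - g (n + 1) ≤ f n) : g 0 ≤ ∑' n, f n := by
  refine le_of_tendsto_of_tendsto' (by simpa using hg.const_sub (g 0)) hf.hasSum.tendsto_sum_nat
    fun n => ?_
  rw [← Finset.sum_range_sub']
  exact Finset.sum_le_sum fun i _ => h i

lemma tendsto_two_mul_sub_one_atTop : Tendsto (fun y : ℝ => 2 * y - 1) atTop atTop :=
  tendsto_atTop_add_const_right _ _ (tendsto_id.const_mul_atTop two_pos)

lemma hurwitzSum_two_le {x : ℝ} (hx : 1 / 2 < x) : hurwitzSum 2 x ≤ 2 / (2 * x - 1) := by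
  have step {m : ℝ} (hm : 1 / 2 < m) : (m ^ 2)⁻¹ ≤ 2 / (2 * m - 1) - 2 / (2 * (m + 1) - 1) := by
    have h1 : 0 < 2 * m - 1 := by linarith
    have h2 : 0 < 2 * (m + 1) - 1 := by linarith
    rw [div_sub_div _ _ h1.ne' h2.ne', inv_eq_one_div,
      div_le_div_iff₀ (by positivity) (by positivity)]
    nlinarith
  have hg : Tendsto (fun y : ℝ => 2 / (2 * y - 1)) atTop (𝓝 0) :=
    tendsto_two_mul_sub_one_atTop.const_div_atTop 2
  simpa [hurwitzSum] using tsum_le_of_le_sub_succ (summable_inv_add_pow x one_lt_two)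
    (hg.comp (tendsto_atTop_add_const_left _ x tendsto_natCast_atTop_atTop)) fun n => by
      simpa [add_assoc] using step (m := x + n) (by linarith [n.cast_nonneg (α := ℝ)])

lemma one_div_le_hurwitzSum_three {x : ℝ} (hx : 1 ≤ x) :
    1 / (x * (2 * x - 1)) ≤ hurwitzSum 3 x := by
  have step {m : ℝ} (hm : 1 ≤ m) :
      1 / (m * (2 * m - 1)) - 1 / ((m + 1) * (2 * (m + 1) - 1)) ≤ (m ^ 3)⁻¹ := by
    have h1 : 0 < 2 * m - 1 := by linarith
    have h2 : 0 < 2 * (m + 1) - 1 := by linarith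
    have h3 : 0 < m := by linarith
    rw [div_sub_div _ _ (by positivity) (by positivity), inv_eq_one_div,
      div_le_div_iff₀ (by positivity) (by positivity)]
    nlinarith [mul_pos h3 h3, mul_pos (mul_pos h3 h3) h3]
  have hg : Tendsto (fun y : ℝ => 1 / (y * (2 * y - 1))) atTop (𝓝 0) :=
    (tendsto_id.atTop_mul_atTop₀ tendsto_two_mul_sub_one_atTop).const_div_atTop 1
  simpa [hurwitzSum] using le_tsum_of_sub_succ_le (summable_inv_add_pow x (by norm_num : 1 < 3))
    (hg.comp (tendsto_atTop_add_const_left _ x tendsto_natCast_atTop_atTop)) fun n => by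
      simpa [add_assoc] using step (m := x + n) (by linarith [n.cast_nonneg (α := ℝ)])

lemma hurwitzSum_two_le_mul_hurwitzSum_three {x : ℝ} (hx : 0 < x) :
    hurwitzSum 2 x ≤ 2 * x * hurwitzSum 3 x := by
  rcases le_or_gt 1 x with hx1 | hx1
  · calc hurwitzSum 2 x ≤ 2 / (2 * x - 1) := hurwitzSum_two_le (by linarith)
      _ = 2 * x * (1 / (x * (2 * x - 1))) := by field_simp
      _ ≤ 2 * x * hurwitzSum 3 x := by gcongr; exact one_div_le_hurwitzSum_three hx1
  · calc hurwitzSum 2 x = (x ^ 2)⁻¹ + hurwitzSum 2 (x + 1) :=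
          hurwitzSum_eq_inv_pow_add one_lt_two x
      _ ≤ (x ^ 2)⁻¹ + 2 / (2 * (x + 1) - 1) := by gcongr; exact hurwitzSum_two_le (by linarith)
      _ ≤ 2 * x * (x ^ 3)⁻¹ := by
        have h : 0 < 2 * (x + 1) - 1 := by linarith
        rw [inv_eq_one_div, inv_eq_one_div, div_add_div _ _ (by positivity) h.ne',
          mul_one_div, div_le_div_iff₀ (by positivity) (by positivity)]
        nlinarith [pow_pos hx 3, pow_pos hx 4]
      _ ≤ 2 * x * hurwitzSum 3 x := by gcongr; exact inv_pow_le_hurwitzSum (by norm_num) hx.le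

lemma hasDerivAt_inv_add_pow (k : ℕ) {a y : ℝ} (h : y + a ≠ 0) :
    HasDerivAt (fun z => ((z + a) ^ k)⁻¹) (-k * ((y + a) ^ (k + 1))⁻¹) y := by
  have := (hasDerivAt_zpow (-k) (y + a) (.inl h)).comp_add_const y a
  rw [show (-k : ℤ) - 1 = -((k + 1 : ℕ) : ℤ) by push_cast; ring] at this
  simpa only [zpow_neg, zpow_natCast, Int.cast_neg, Int.cast_natCast] using this

lemma hasDerivAt_hurwitzSum {k : ℕ} (hk : 1 < k) {x : ℝ} (hx : 0 < x) :
    HasDerivAt (hurwitzSum k) (-k * hurwitzSum (k + 1) x) x := by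
  have hx2 : x ∈ Ioi (x / 2) := by simp [hx]
  have hx2' : 0 < x / 2 := by positivity
  have h := hasDerivAt_tsum_of_isPreconnected (g := fun (n : ℕ) (z : ℝ) => ((z + n) ^ k)⁻¹)
    (u := fun n : ℕ => k * ((x / 2 + n) ^ (k + 1))⁻¹)
    ((summable_inv_add_pow (x / 2) (by omega : 1 < k + 1)).mul_left (k : ℝ)) isOpen_Ioi
    isPreconnected_Ioi
    (fun n y (hy : x / 2 < y) => hasDerivAt_inv_add_pow k (by positivity [hx2'.trans hy]))
    (fun n y (hy : x / 2 < y) => by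
      have : 0 < x / 2 + n := by positivity
      have : 0 < y + n := by positivity [hx2'.trans hy]
      rw [norm_mul, norm_neg, Real.norm_natCast, norm_inv, norm_pow,
        Real.norm_of_nonneg (by linarith)]
      gcongr)
    hx2 (summable_inv_add_pow x hk) hx2
  rwa [tsum_mul_left] at h

/-- The series for the digamma function `ψ = (log Γ)'`, valid on `(0, ∞)`. -/
noncomputable def digammaSeries (x : ℝ) : ℝ :=
  -eulerMascheroniConstant + ∑' n : ℕ, ((1 + n : ℝ)⁻¹ - (x + n)⁻¹)

lemma hasDerivAt_digammaSeries {x : ℝ} (hx : 0 < x) :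
    HasDerivAt digammaSeries (hurwitzSum 2 x) x := by
  set a := min x 1 / 2
  have ha : 0 < a := by positivity
  have hxa : x ∈ Ioi a := by simp only [mem_Ioi, a]; linarith [min_le_left x 1]
  have h1a : (1 : ℝ) ∈ Ioi a := by simp only [mem_Ioi, a]; linarith [min_le_right x 1]
  have h := hasDerivAt_tsum_of_isPreconnected
    (g := fun (n : ℕ) (z : ℝ) => (1 + n : ℝ)⁻¹ - (z + n)⁻¹)
    (g' := fun (n : ℕ) (y : ℝ) => ((y + n) ^ 2)⁻¹)
    (summable_inv_add_pow a one_lt_two) isOpen_Ioi isPreconnected_Ioi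
    (fun n y (hy : a < y) => by
      have : 0 < y := ha.trans hy
      simpa using (hasDerivAt_inv_add_pow 1 (a := n) (by positivity)).const_sub (1 + n : ℝ)⁻¹)
    (fun n y (hy : a < y) => by
      have : 0 < y := ha.trans hy
      rw [norm_inv, norm_pow, Real.norm_of_nonneg (by positivity)]
      gcongr)
    h1a (by simp) hxa -- every term vanishes at `z = 1`
  exact h.const_add _

lemma tendsto_log_sub_sum_inv_one_add :
    Tendsto (fun n : ℕ => log n - ∑ m ∈ Finset.range (n + 1), (1 + m : ℝ)⁻¹) atTop
      (𝓝 (-eulerMascheroniConstant)) := by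
  have h := (tendsto_harmonic_sub_log.add tendsto_one_div_add_atTop_nhds_zero_nat).neg
  refine Tendsto.congr (fun n => ?_) (by simpa using h)
  simp only [harmonic, Nat.cast_add, Nat.cast_one, Rat.cast_sum, Rat.cast_inv, Rat.cast_add,
    Rat.cast_natCast, Rat.cast_one, add_comm, Finset.sum_range_succ]
  ring

lemma abs_inv_one_add_sub_inv_add_le {a b y : ℝ} (m : ℕ) (ha : 0 < a) (ha1 : a ≤ 1)
    (hy : y ∈ Ioo a b) : |(1 + m : ℝ)⁻¹ - (y + m)⁻¹| ≤ (1 + b) * ((a + m) ^ 2)⁻¹ := by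
  obtain ⟨hay, hyb⟩ := hy
  have hm : (0 : ℝ) ≤ m := m.cast_nonneg
  have hy0 : 0 < y + m := by linarith
  have hden : (a + m) ^ 2 ≤ (1 + m) * (y + m) := by nlinarith
  have hnum : |y + m - (1 + m)| ≤ 1 + b := by rw [abs_le]; constructor <;> linarith
  rw [inv_sub_inv (by positivity) hy0.ne', abs_div,
    abs_of_pos (by positivity : 0 < (1 + m : ℝ) * (y + m)), ← div_eq_mul_inv]
  exact div_le_div₀ (by linarith) hnum (by positivity) hden

lemma tendstoUniformlyOn_deriv_logGammaSeq {a b : ℝ} (ha : 0 < a) (ha1 : a ≤ 1) :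
    TendstoUniformlyOn (fun (n : ℕ) (y : ℝ) => log n - ∑ m ∈ Finset.range (n + 1), (y + m)⁻¹)
      digammaSeries atTop (Ioo a b) := by
  have hseries := tendstoUniformlyOn_tsum_nat
    ((summable_inv_add_pow a one_lt_two).mul_left (1 + b))
    fun m y hy => (Real.norm_eq_abs _).trans_le (abs_inv_one_add_sub_inv_add_le m ha ha1 hy)
  -- `log n - ∑_{m ≤ n} (y + m)⁻¹ = (log n - H_{n+1}) + ∑_{m ≤ n} ((1 + m)⁻¹ - (y + m)⁻¹)`
  refine ((tendsto_log_sub_sum_inv_one_add.tendstoUniformlyOn_const _).add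
    fun u hu => (tendsto_add_atTop_nat 1).eventually (hseries u hu)).congr ?_
  filter_upwards with n y _
  simp [Finset.sum_sub_distrib]

lemma hasDerivAt_logGammaSeq (n : ℕ) {y : ℝ} (hy : 0 < y) :
    HasDerivAt (BohrMollerup.logGammaSeq · n)
      (log n - ∑ m ∈ Finset.range (n + 1), (y + m)⁻¹) y := by
  have hlog : ∀ m ∈ Finset.range (n + 1), HasDerivAt (fun z => log (z + m)) (y + m)⁻¹ y :=
    fun m _ => by simpa using ((hasDerivAt_id y).add_const (m : ℝ)).log (by positivity)
  have h := (((hasDerivAt_id y).mul_const (log n)).add_const (log n.factorial)).sub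
    (HasDerivAt.fun_sum hlog)
  rwa [one_mul] at h

lemma hasDerivAt_log_Gamma {x : ℝ} (hx : 0 < x) :
    HasDerivAt (fun y => log (Gamma y)) (digammaSeries x) x := by
  have ha : 0 < min x 1 / 2 := by positivity
  have hxs : x ∈ Ioo (min x 1 / 2) (x + 1) := ⟨by linarith [min_le_left x 1], by linarith⟩
  refine hasDerivAt_of_tendstoUniformlyOn isOpen_Ioo
    (tendstoUniformlyOn_deriv_logGammaSeq ha (by linarith [min_le_right x 1]))
    (.of_forall fun n y hy => hasDerivAt_logGammaSeq n (ha.trans hy.1))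
    (fun y hy => BohrMollerup.tendsto_log_gamma (ha.trans hy.1)) hxs

lemma trigamma_eq_hurwitzSum {x : ℝ} (hx : 0 < x) : trigamma x = hurwitzSum 2 x := by
  have h : deriv (fun y => log (Gamma y)) =ᶠ[𝓝 x] digammaSeries :=
    eventually_of_mem (Ioi_mem_nhds hx) fun y hy => (hasDerivAt_log_Gamma hy).deriv
  rw [trigamma, iteratedDeriv_succ, iteratedDeriv_one, h.deriv_eq,
    (hasDerivAt_digammaSeries hx).deriv]

lemma antitoneOn_mul_hurwitzSum_two : AntitoneOn (fun x => x * hurwitzSum 2 x) (Ioi 0) := by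
  have hd (x : ℝ) (hx : 0 < x) : HasDerivAt (fun x => x * hurwitzSum 2 x)
      (hurwitzSum 2 x - 2 * x * hurwitzSum 3 x) x := by
    refine ((hasDerivAt_id' x).mul (hasDerivAt_hurwitzSum one_lt_two hx)).congr_deriv ?_
    push_cast
    ring
  refine antitoneOn_of_hasDerivWithinAt_nonpos (convex_Ioi 0)
    (f' := fun x => hurwitzSum 2 x - 2 * x * hurwitzSum 3 x)
    (fun x hx => (hd x hx).continuousAt.continuousWithinAt) (fun x hx => ?_) fun x hx => ?_
  all_goals rw [interior_Ioi] at hx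
  · exact (hd x hx).hasDerivWithinAt
  · exact sub_nonpos.2 (hurwitzSum_two_le_mul_hurwitzSum_three hx)

lemma add_mul_le_of_antitoneOn {φ : ℝ → ℝ} (hφ : AntitoneOn φ (Ioi 0)) {x y : ℝ} (hx : 0 < x)
    (hy : 0 < y) :
    (x + y) * φ (x + y) ≤ x * φ x + y * φ y := by
  have hxy : 0 < x + y := by positivity
  rw [add_mul]
  gcongr
  · exact hφ hx hxy (by linarith)
  · exact hφ hy hxy (by linarith)

/-- The function `z ↦ z² ψ'(z)` is subadditive on `(0, ∞)`. -/
theorem sq_mul_trigamma_subadditive (x y : ℝ) (hx : 0 < x) (hy : 0 < y) :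
    (x + y) ^ 2 * trigamma (x + y) ≤ x ^ 2 * trigamma x + y ^ 2 * trigamma y := by
  have h := add_mul_le_of_antitoneOn antitoneOn_mul_hurwitzSum_two hx hy
  rw [trigamma_eq_hurwitzSum hx, trigamma_eq_hurwitzSum hy, trigamma_eq_hurwitzSum (by positivity)]
  simpa only [sq, mul_assoc] using h
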